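/- Let A : ℕ × ℕ → ℂ be an antisymmetric kernel (A(i,j) = −A(j,i)). Define S on finite lists recursively by S([]) = 1, S([i]) = 0, and S(i₁,…,i_n) = Σ_{l=2}^n (−1)^{l-2}·A(i₁,i_l)·S(i₂,…,î_l,…,i_n). Then for n = 2m even, S(i₁,…,i_n) equals the Pfaffian-type sum Σ_ρ sgn(ρ)·Π_{j=1}^m A(i_{ρ(2j−1)}, i_{ρ(2j)}), where ρ runs over permutations of {1,…,n} with ρ(2j−1) < ρ(2j) and ρ(1) < ρ(3) < ⋯ < ρ(2m−1); and S = 0 for n odd. -/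

import Mathlib

/-- The fermionic Wick recursion: `S([]) = 1`, `S([i]) = 0`, and
`S(i₁,…,i_n) = Σ_{l=2}^n (−1)^{l−2}·A(i₁, i_l)·S(i₂,…,î_l,…,i_n)`. -/
noncomputable def fwick (A : ℕ → ℕ → ℂ) : List ℕ → ℂ
  | [] => 1
  | [_] => 0
  | i :: rest =>
      ∑ l : Fin rest.length,
        (-1 : ℂ) ^ (l : ℕ) * A i (rest.get l) * fwick A (rest.eraseIdx (l : ℕ))
termination_by v => v.length
decreasing_by
  have hl := l.isLt
  simp [List.length_eraseIdx]
  all_goals omega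

section WickAux
open Equiv Equiv.Perm Finset

/-- extend a permutation of `Fin N` to `Fin (N+2)` fixing `0` and `1`. -/
noncomputable def padp {N : ℕ} (e : Perm (Fin N)) : Perm (Fin (N + 2)) :=
  decomposeFin.symm (0, decomposeFin.symm (0, e))

@[simp] lemma padp_zero {N : ℕ} (e : Perm (Fin N)) : padp e 0 = 0 :=
  Equiv.Perm.decomposeFin_symm_apply_zero _ _

@[simp] lemma padp_one {N : ℕ} (e : Perm (Fin N)) : padp e 1 = 1 := by
  have : (1 : Fin (N + 2)) = (0 : Fin (N + 1)).succ := rfl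
  rw [padp, this, Equiv.Perm.decomposeFin_symm_apply_succ]
  simp

@[simp] lemma padp_succ_succ {N : ℕ} (e : Perm (Fin N)) (x : Fin N) :
    padp e x.succ.succ = (e x).succ.succ := by
  rw [padp, Equiv.Perm.decomposeFin_symm_apply_succ, Equiv.Perm.decomposeFin_symm_apply_succ]
  simp

@[simp] lemma sign_padp {N : ℕ} (e : Perm (Fin N)) : Perm.sign (padp e) = Perm.sign e := by
  rw [padp, Equiv.Perm.decomposeFin.symm_sign, Equiv.Perm.decomposeFin.symm_sign]
  simp

/-- the cycle sending `1 ↦ l+1 ↦ l ↦ ⋯ ↦ 2 ↦ 1`, fixing `0` and everything `> l+1`. -/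
noncomputable def sigp {N : ℕ} (l : Fin (N + 1)) : Perm (Fin (N + 2)) :=
  (Fin.cycleRange l.succ)⁻¹ * Equiv.swap 0 1

@[simp] lemma sigp_zero {N : ℕ} (l : Fin (N + 1)) : sigp l 0 = 0 := by
  rw [sigp, Perm.mul_apply, Equiv.swap_apply_left]
  rw [Equiv.Perm.inv_def, Equiv.symm_apply_eq]
  rw [Fin.cycleRange_of_lt (Fin.succ_pos l)]
  rw [zero_add]

@[simp] lemma sigp_one {N : ℕ} (l : Fin (N + 1)) : sigp l 1 = l.succ := by
  rw [sigp, Perm.mul_apply, Equiv.swap_apply_right]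
  rw [Equiv.Perm.inv_def, Equiv.symm_apply_eq, Fin.cycleRange_self]

@[simp] lemma sigp_succ_succ {N : ℕ} (l : Fin (N + 1)) (x : Fin N) :
    sigp l x.succ.succ = (l.succAbove x).succ := by
  rw [sigp, Perm.mul_apply, Equiv.swap_apply_of_ne_of_ne (by simp [Fin.succ_ne_zero])
    (by
      intro hx
      have := congrArg Fin.val hx
      simp [Fin.val_succ] at this)]
  rw [Equiv.Perm.inv_def, Equiv.symm_apply_eq]
  rcases lt_or_ge (x.castSucc) l with hlt | hle
  · rw [Fin.succAbove_of_castSucc_lt _ _ hlt]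
    have hx : (x : ℕ) < (l : ℕ) := by simpa [Fin.lt_def] using hlt
    rw [Fin.cycleRange_of_lt (by rw [Fin.lt_def]; simp; try omega)]
    apply Fin.ext
    rw [Fin.val_add_one_of_lt (by rw [Fin.lt_def]; simp [Fin.val_last]; try omega)]
    simp
  · rw [Fin.succAbove_of_le_castSucc _ _ hle]
    have hx : (l : ℕ) ≤ (x : ℕ) := by simpa [Fin.le_def] using hle
    rw [Fin.cycleRange_of_gt (by rw [Fin.lt_def]; simp; try omega)]

@[simp] lemma sign_sigp {N : ℕ} (l : Fin (N + 1)) :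
    Perm.sign (sigp l) = (-1) ^ (l : ℕ) := by
  rw [sigp, map_mul, map_inv, Fin.sign_cycleRange, Equiv.Perm.sign_swap (by simp [Fin.ext_iff])]
  simp [Fin.val_succ, pow_succ]


def goodSet (m : ℕ) : Finset (Perm (Fin (2 * m))) :=
  Finset.univ.filter
    (fun ρ : Perm (Fin (2 * m)) =>
      (∀ j : Fin m,
          ρ ⟨2 * (j : ℕ), by have := j.isLt; omega⟩ <
            ρ ⟨2 * (j : ℕ) + 1, by have := j.isLt; omega⟩) ∧
      (∀ j k : Fin m, j < k →
          ρ ⟨2 * (j : ℕ), by have := j.isLt; omega⟩ <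
            ρ ⟨2 * (k : ℕ), by have := k.isLt; omega⟩))

lemma finmk_congr {n a b : ℕ} (ha : a < n) (hb : b < n) (h : a = b) :
    (⟨a, ha⟩ : Fin n) = ⟨b, hb⟩ := by subst h; rfl

noncomputable def phiq {m : ℕ} (l : Fin (2 * m + 1)) (e : Perm (Fin (2 * m))) :
    Perm (Fin (2 * (m + 1))) := sigp l * padp e

lemma phi_mk0 {m : ℕ} (l : Fin (2 * m + 1)) (e : Perm (Fin (2 * m))) {a : ℕ}
    {h : a < 2 * (m + 1)} (ha : a = 0) :
    phiq l e ⟨a, h⟩ = 0 := by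
  subst ha
  have h2 : (⟨0, h⟩ : Fin (2 * (m + 1))) = 0 := by apply Fin.ext; simp
  show (sigp l * padp e) _ = _
  rw [h2, Perm.mul_apply, padp_zero, sigp_zero]

lemma phi_mk1 {m : ℕ} (l : Fin (2 * m + 1)) (e : Perm (Fin (2 * m))) {a : ℕ}
    {h : a < 2 * (m + 1)} (ha : a = 1) :
    phiq l e ⟨a, h⟩ = l.succ := by
  subst ha
  have h2 : (⟨1, h⟩ : Fin (2 * (m + 1))) = 1 := by apply Fin.ext; simp; exact (Nat.mod_eq_of_lt h).symm
  show (sigp l * padp e) _ = _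
  rw [h2, Perm.mul_apply, padp_one, sigp_one]

lemma phi_mk2 {m : ℕ} (l : Fin (2 * m + 1)) (e : Perm (Fin (2 * m))) {a : ℕ}
    {h : a < 2 * (m + 1)} {b : ℕ} (hb : b < 2 * m) (hab : a = b + 2) :
    phiq l e ⟨a, h⟩ = (l.succAbove (e ⟨b, hb⟩)).succ := by
  subst hab
  have h2 : (⟨b + 2, h⟩ : Fin (2 * (m + 1))) = (⟨b, hb⟩ : Fin (2 * m)).succ.succ := rfl
  show (sigp l * padp e) _ = _
  rw [h2, Perm.mul_apply, padp_succ_succ, sigp_succ_succ]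

lemma sign_phiq {m : ℕ} (l : Fin (2 * m + 1)) (e : Perm (Fin (2 * m))) :
    Perm.sign (phiq l e) = (-1) ^ (l : ℕ) * Perm.sign e := by
  have h : Perm.sign (phiq l e) = Perm.sign (sigp l * padp e) := rfl
  rw [h, map_mul, sign_sigp, sign_padp]

lemma phi_mem_iff {m : ℕ} (l : Fin (2 * m + 1)) (e : Perm (Fin (2 * m))) :
    phiq l e ∈ goodSet (m + 1) ↔ e ∈ goodSet m := by
  simp only [goodSet, Finset.mem_filter, Finset.mem_univ, true_and]
  constructor
  · rintro ⟨c1, c2⟩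
    constructor
    · intro j
      have hj := j.isLt
      obtain ⟨j2, hj2⟩ : ∃ j2 : Fin (m + 1), (j2 : ℕ) = (j : ℕ) + 1 := ⟨⟨_, by omega⟩, rfl⟩
      have := c1 j2
      rw [phi_mk2 l e (show 2 * (j : ℕ) < 2 * m by omega) (by omega),
        phi_mk2 l e (show 2 * (j : ℕ) + 1 < 2 * m by omega) (by omega)] at this
      exact Fin.succAbove_lt_succAbove_iff.mp (Fin.succ_lt_succ_iff.mp this)
    · intro j k hjk
      have hj := j.isLt
      have hk := k.isLt
      obtain ⟨j2, hj2⟩ : ∃ j2 : Fin (m + 1), (j2 : ℕ) = (j : ℕ) + 1 := ⟨⟨_, by omega⟩, rfl⟩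
      obtain ⟨k2, hk2⟩ : ∃ k2 : Fin (m + 1), (k2 : ℕ) = (k : ℕ) + 1 := ⟨⟨_, by omega⟩, rfl⟩
      have := c2 j2 k2 (by rw [Fin.lt_def]; omega)
      rw [phi_mk2 l e (show 2 * (j : ℕ) < 2 * m by omega) (by omega),
        phi_mk2 l e (show 2 * (k : ℕ) < 2 * m by omega) (by omega)] at this
      exact Fin.succAbove_lt_succAbove_iff.mp (Fin.succ_lt_succ_iff.mp this)
  · rintro ⟨c1, c2⟩
    constructor
    · intro j
      have hj := j.isLt
      rcases Nat.eq_zero_or_pos (j : ℕ) with hj0 | hj0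
      · rw [phi_mk0 l e (by omega), phi_mk1 l e (by omega)]
        exact Fin.succ_pos l
      · obtain ⟨j2, hj2⟩ : ∃ j2 : Fin m, (j2 : ℕ) = (j : ℕ) - 1 := ⟨⟨_, by omega⟩, rfl⟩
        rw [phi_mk2 l e (show 2 * (j2 : ℕ) < 2 * m by omega) (by omega),
          phi_mk2 l e (show 2 * (j2 : ℕ) + 1 < 2 * m by omega) (by omega)]
        exact Fin.succ_lt_succ_iff.mpr (Fin.succAbove_lt_succAbove_iff.mpr (c1 j2))
    · intro j k hjk
      have hj := j.isLt
      have hk := k.isLt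
      have hk0 : 0 < (k : ℕ) := lt_of_le_of_lt (Nat.zero_le _) hjk
      obtain ⟨k2, hk2⟩ : ∃ k2 : Fin m, (k2 : ℕ) = (k : ℕ) - 1 := ⟨⟨_, by omega⟩, rfl⟩
      rcases Nat.eq_zero_or_pos (j : ℕ) with hj0 | hj0
      · rw [phi_mk0 l e (by omega),
          phi_mk2 l e (show 2 * (k2 : ℕ) < 2 * m by omega) (by omega)]
        exact Fin.succ_pos _
      · obtain ⟨j2, hj2⟩ : ∃ j2 : Fin m, (j2 : ℕ) = (j : ℕ) - 1 := ⟨⟨_, by omega⟩, rfl⟩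
        rw [phi_mk2 l e (show 2 * (j2 : ℕ) < 2 * m by omega) (by omega),
          phi_mk2 l e (show 2 * (k2 : ℕ) < 2 * m by omega) (by omega)]
        exact Fin.succ_lt_succ_iff.mpr
          (Fin.succAbove_lt_succAbove_iff.mpr (c2 j2 k2 (by rw [Fin.lt_def]; omega)))

lemma phi_surj {m : ℕ} (ρ : Perm (Fin (2 * (m + 1)))) (hρ : ρ ∈ goodSet (m + 1)) :
    ∃ (l : Fin (2 * m + 1)) (e : Perm (Fin (2 * m))), phiq l e = ρ := by
  obtain ⟨-, c1, c2⟩ := Finset.mem_filter.mp hρ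
  -- ρ 0 = 0
  have hmin : ∀ (a : ℕ) (ha : a < 2 * (m + 1)) (h0 : (0 : ℕ) < 2 * (m + 1)),
      ρ ⟨0, h0⟩ ≤ ρ ⟨a, ha⟩ := by
    intro a ha h0
    obtain ⟨j, hj, hx⟩ : ∃ j, j < m + 1 ∧ (a = 2 * j ∨ a = 2 * j + 1) :=
      ⟨a / 2, by omega, by omega⟩
    obtain ⟨j2, hj2⟩ : ∃ j2 : Fin (m + 1), (j2 : ℕ) = j := ⟨⟨j, hj⟩, rfl⟩
    obtain ⟨z2, hz2⟩ : ∃ z2 : Fin (m + 1), (z2 : ℕ) = 0 := ⟨⟨0, by omega⟩, rfl⟩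
    have heven : ρ ⟨0, h0⟩ ≤ ρ ⟨2 * j, by omega⟩ := by
      rcases Nat.eq_zero_or_pos j with hj0 | hj0
      · exact le_of_eq (congrArg ρ (finmk_congr _ _ (by omega)))
      · have := c2 z2 j2 (by rw [Fin.lt_def]; omega)
        rw [finmk_congr _ h0 (by omega : 2 * (z2 : ℕ) = 0),
          finmk_congr _ (by omega : 2 * j < 2 * (m + 1)) (by omega : 2 * (j2 : ℕ) = 2 * j)] at this
        exact le_of_lt this
    rcases hx with hx | hx
    · exact le_of_le_of_eq heven (congrArg ρ (finmk_congr _ _ (by omega)))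
    · refine le_trans heven (le_of_lt ?_)
      have := c1 j2
      rwa [finmk_congr _ (by omega : 2 * j < 2 * (m + 1)) (by omega : 2 * (j2 : ℕ) = 2 * j),
        finmk_congr _ ha (by omega : 2 * (j2 : ℕ) + 1 = a)] at this
  have h0' : (0 : ℕ) < 2 * (m + 1) := by omega
  have hρ0 : ρ 0 = 0 := by
    have h1 : ρ ⟨0, h0'⟩ ≤ ρ (ρ.symm ⟨0, h0'⟩) := by
      have := hmin ((ρ.symm ⟨0, h0'⟩ : Fin (2 * (m + 1))) : ℕ) (Fin.is_lt _) h0'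
      simpa using this
    rw [Equiv.apply_symm_apply] at h1
    have h2 : (⟨0, h0'⟩ : Fin (2 * (m + 1))) = 0 := by apply Fin.ext; simp
    rw [h2] at h1
    exact le_antisymm h1 (Fin.zero_le _)
  have hρ1 : 1 ≤ ((ρ 1 : Fin (2 * (m + 1))) : ℕ) := by
    rcases Nat.eq_zero_or_pos ((ρ 1 : Fin (2 * (m + 1))) : ℕ) with hc | hc
    · exfalso
      have : ρ 1 = ρ 0 := by
        rw [hρ0]; apply Fin.ext; simpa using hc
      have := ρ.injective this
      exact absurd (congrArg Fin.val this) (by simp)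
    · exact hc
  set l : Fin (2 * m + 1) := ⟨((ρ 1 : Fin (2 * (m + 1))) : ℕ) - 1,
    by have := (ρ 1).isLt; omega⟩ with hl
  have hls : l.succ = ρ 1 := by
    apply Fin.ext
    simp only [Fin.val_succ, hl]
    omega
  set τ : Perm (Fin (2 * (m + 1))) := ((sigp l)⁻¹ : Perm (Fin (2 * (m + 1)))) * ρ with hτdef
  have hτ0 : τ 0 = 0 := by
    rw [hτdef, Perm.mul_apply, hρ0, Equiv.Perm.inv_eq_iff_eq]
    exact (sigp_zero l).symm
  have hτ1 : τ 1 = 1 := by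
    rw [hτdef, Perm.mul_apply, Equiv.Perm.inv_eq_iff_eq]
    exact hls.symm.trans (sigp_one l).symm
  set p := Equiv.Perm.decomposeFin τ with hpdef
  have hτp : Equiv.Perm.decomposeFin.symm p = τ := Equiv.symm_apply_apply _ τ
  have hp1 : p.1 = 0 := by
    have : Equiv.Perm.decomposeFin.symm (p.1, p.2) 0 = p.1 :=
      Equiv.Perm.decomposeFin_symm_apply_zero p.1 p.2
    rw [Prod.mk.eta, hτp] at this
    rw [← this]
    exact hτ0
  have hp20 : p.2 0 = 0 := by
    have h1 : Equiv.Perm.decomposeFin.symm (p.1, p.2) (0 : Fin (2 * m + 1)).succ =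
        Equiv.swap 0 p.1 (p.2 0).succ := Equiv.Perm.decomposeFin_symm_apply_succ p.2 p.1 0
    rw [Prod.mk.eta, hτp, hp1, Equiv.swap_self, Equiv.refl_apply] at h1
    apply Fin.succ_injective
    rw [← h1]
    exact hτ1
  set q := Equiv.Perm.decomposeFin p.2 with hqdef
  have hpq : Equiv.Perm.decomposeFin.symm q = p.2 := Equiv.symm_apply_apply _ p.2
  have hq1 : q.1 = 0 := by
    have : Equiv.Perm.decomposeFin.symm (q.1, q.2) 0 = q.1 :=
      Equiv.Perm.decomposeFin_symm_apply_zero q.1 q.2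
    rw [Prod.mk.eta, hpq] at this
    rw [← this]
    exact hp20
  refine ⟨l, q.2, ?_⟩
  have hpad : padp q.2 = τ := by
    show Equiv.Perm.decomposeFin.symm (0, Equiv.Perm.decomposeFin.symm (0, q.2)) = τ
    rw [← hq1, Prod.mk.eta, hpq, ← hp1, Prod.mk.eta, hτp]
  show sigp l * padp q.2 = ρ
  rw [hpad, hτdef, mul_inv_cancel_left]

lemma phi_inj {m : ℕ} {l l' : Fin (2 * m + 1)} {e e' : Perm (Fin (2 * m))}
    (h : phiq l e = phiq l' e') : l = l' ∧ e = e' := by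
  have hll : l = l' := by
    have h1 := congrArg (fun σ : Perm (Fin (2 * (m + 1))) => σ ⟨1, by omega⟩) h
    rw [phi_mk1 l e rfl, phi_mk1 l' e' rfl] at h1
    exact Fin.succ_injective _ h1
  subst hll
  refine ⟨rfl, ?_⟩
  apply Equiv.ext
  intro x
  have hx := x.isLt
  have h1 := congrArg (fun σ : Perm (Fin (2 * (m + 1))) => σ ⟨(x : ℕ) + 2, by omega⟩) h
  rw [phi_mk2 l e x.isLt rfl, phi_mk2 l e' x.isLt rfl] at h1
  have h2 := Fin.succAbove_right_injective (Fin.succ_injective _ h1)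
  have h3 : (⟨(x : ℕ), x.isLt⟩ : Fin (2 * m)) = x := rfl
  rwa [h3] at h2

noncomputable def pfSum (A : ℕ → ℕ → ℂ) (m : ℕ) (v : List ℕ) (h : v.length = 2 * m) : ℂ :=
  ∑ ρ ∈ goodSet m,
    ((Equiv.Perm.sign ρ : ℤ) : ℂ) *
      ∏ j : Fin m,
        A (v.get (Fin.cast h.symm (ρ ⟨2 * (j : ℕ), (by have := j.isLt; omega : 2 * (j : ℕ) < 2 * m + 0)⟩)))
          (v.get (Fin.cast h.symm (ρ ⟨2 * (j : ℕ) + 1, (by have := j.isLt; omega : 2 * (j : ℕ) + 1 < 2 * m + 0)⟩)))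

lemma pfSum_zero (A : ℕ → ℕ → ℂ) (v : List ℕ) (h : v.length = 2 * 0) :
    pfSum A 0 v h = 1 := by
  rw [pfSum]
  have h1 : goodSet 0 = {(1 : Perm (Fin (2 * 0)))} := by
    apply Finset.ext
    intro ρ
    simp only [goodSet, Finset.mem_filter, Finset.mem_univ, true_and, Finset.mem_singleton]
    constructor
    · intro _
      apply Equiv.ext
      intro x
      exact absurd x.isLt (by omega)
    · intro _
      exact ⟨fun j => absurd j.isLt (by omega), fun j => absurd j.isLt (by omega)⟩
  rw [h1, Finset.sum_singleton]
  simp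

lemma getElem_succAbove_eraseIdx {m : ℕ} (rest : List ℕ) (hr : rest.length = 2 * m + 1)
    (l : Fin (2 * m + 1)) (w : Fin (2 * m))
    (h1 : ((l.succAbove w : Fin (2 * m + 1)) : ℕ) < rest.length)
    (h2 : (w : ℕ) < (rest.eraseIdx (l : ℕ)).length) :
    rest[((l.succAbove w : Fin (2 * m + 1)) : ℕ)] = (rest.eraseIdx (l : ℕ))[(w : ℕ)] := by
  rw [List.getElem_eraseIdx]
  rcases lt_or_ge w.castSucc l with hlt | hle
  · have hv : ((w : Fin (2 * m)) : ℕ) < (l : ℕ) := by simpa [Fin.lt_def] using hlt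
    rw [dif_pos hv]
    have : ((l.succAbove w : Fin (2 * m + 1)) : ℕ) = (w : ℕ) := by
      rw [Fin.succAbove_of_castSucc_lt _ _ hlt]; simp
    simp only [this]
  · have hv : ¬ ((w : Fin (2 * m)) : ℕ) < (l : ℕ) := by
      simp only [Fin.le_def, Fin.coe_castSucc] at hle; omega
    rw [dif_neg hv]
    have : ((l.succAbove w : Fin (2 * m + 1)) : ℕ) = (w : ℕ) + 1 := by
      rw [Fin.succAbove_of_le_castSucc _ _ hle]; simp
    simp only [this]

lemma pfSum_cons (A : ℕ → ℕ → ℂ) (m : ℕ) (i : ℕ) (rest : List ℕ)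
    (hr : rest.length = 2 * m + 1) (h : (i :: rest).length = 2 * (m + 1)) :
    pfSum A (m + 1) (i :: rest) h =
      ∑ l : Fin rest.length,
        (-1 : ℂ) ^ (l : ℕ) * A i (rest.get l) *
          pfSum A m (rest.eraseIdx (l : ℕ))
            (by rw [List.length_eraseIdx]; simp only [l.isLt, if_true]; omega) := by
  simp only [pfSum]
  simp only [Finset.mul_sum]
  rw [Finset.sum_sigma']
  refine (Finset.sum_bij (fun x _ => phiq (finCongr hr x.1) x.2) ?_ ?_ ?_ ?_).symm
  · rintro ⟨l, e⟩ hx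
    exact (phi_mem_iff _ _).mpr (Finset.mem_sigma.mp hx).2
  · rintro ⟨l, e⟩ hx ⟨l', e'⟩ hx' hee
    obtain ⟨h1, h2⟩ := phi_inj hee
    have : l = l' := by
      have := congrArg Fin.val h1
      simp only [finCongr_apply, Fin.coe_cast] at this
      exact Fin.ext this
    subst this; subst h2; rfl
  · intro ρ hρ
    obtain ⟨l, e, hel⟩ := phi_surj ρ hρ
    refine ⟨⟨finCongr hr.symm l, e⟩, Finset.mem_sigma.mpr ⟨Finset.mem_univ _, ?_⟩, ?_⟩
    · exact (phi_mem_iff l e).mp (hel ▸ hρ)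
    · show phiq (finCongr hr (finCongr hr.symm l)) e = ρ
      have h2 : finCongr hr (finCongr hr.symm l) = l := by
        apply Fin.ext; simp
      rw [h2, hel]
  · rintro ⟨l, e⟩ hx
    have he := (Finset.mem_sigma.mp hx).2
    set l2 : Fin (2 * m + 1) := finCongr hr l with hl2
    have hl2v : (l2 : ℕ) = (l : ℕ) := by simp [hl2]
    rw [sign_phiq]
    rw [Fin.prod_univ_succ]
    -- first factor
    have hf0 : ∀ (pf : 2 * ((0 : Fin (m + 1)) : ℕ) < 2 * (m + 1))
        (pf1 : 2 * ((0 : Fin (m + 1)) : ℕ) + 1 < 2 * (m + 1)),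
        A ((i :: rest).get (Fin.cast h.symm (phiq l2 e ⟨2 * ((0 : Fin (m + 1)) : ℕ), pf⟩)))
          ((i :: rest).get (Fin.cast h.symm (phiq l2 e ⟨2 * ((0 : Fin (m + 1)) : ℕ) + 1, pf1⟩))) =
        A i (rest.get l) := by
      intro pf pf1
      rw [phi_mk0 l2 e (by simp), phi_mk1 l2 e (by simp)]
      have e1 : (i :: rest).get (Fin.cast h.symm (0 : Fin (2 * (m + 1)))) = i := by simp
      have e2 : (i :: rest).get (Fin.cast h.symm l2.succ) = rest.get l := by
        simp only [List.get_eq_getElem, Fin.coe_cast, Fin.val_succ, List.getElem_cons_succ, hl2v]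
      rw [e1, e2]
    rw [hf0]
    -- remaining factors
    have hfs : (∏ j : Fin m,
        A ((i :: rest).get (Fin.cast h.symm
            (phiq l2 e ⟨2 * ((j.succ : Fin (m + 1)) : ℕ), by have := j.isLt; omega⟩)))
          ((i :: rest).get (Fin.cast h.symm
            (phiq l2 e ⟨2 * ((j.succ : Fin (m + 1)) : ℕ) + 1, by have := j.isLt; omega⟩)))) =
        ∏ j : Fin m,
          A ((rest.eraseIdx (l : ℕ)).get (Fin.cast
              (by rw [List.length_eraseIdx]; simp only [l.isLt, if_true]; omega)
              (e ⟨2 * (j : ℕ), by have := j.isLt; omega⟩)))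
            ((rest.eraseIdx (l : ℕ)).get (Fin.cast
              (by rw [List.length_eraseIdx]; simp only [l.isLt, if_true]; omega)
              (e ⟨2 * (j : ℕ) + 1, by have := j.isLt; omega⟩))) := by
      apply Finset.prod_congr rfl
      intro j _
      have hj := j.isLt
      rw [phi_mk2 l2 e (show 2 * (j : ℕ) < 2 * m by omega)
          (show 2 * ((j.succ : Fin (m + 1)) : ℕ) = 2 * (j : ℕ) + 2 by
            simp only [Fin.val_succ]; ring),
        phi_mk2 l2 e (show 2 * (j : ℕ) + 1 < 2 * m by omega)
          (show 2 * ((j.succ : Fin (m + 1)) : ℕ) + 1 = (2 * (j : ℕ) + 1) + 2 by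
            simp only [Fin.val_succ]; ring)]
      congr 1
      · simp only [List.get_eq_getElem, Fin.coe_cast, Fin.val_succ, List.getElem_cons_succ]
        simp only [← hl2v]
        exact getElem_succAbove_eraseIdx rest hr l2 _ (by rw [hr]; exact Fin.is_lt _) _
      · simp only [List.get_eq_getElem, Fin.coe_cast, Fin.val_succ, List.getElem_cons_succ]
        simp only [← hl2v]
        exact getElem_succAbove_eraseIdx rest hr l2 _ (by rw [hr]; exact Fin.is_lt _) _
    rw [hfs]
    simp only [Units.val_mul, Int.cast_mul, Units.val_pow_eq_pow_val, Units.val_neg,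
      Units.val_one, Int.cast_pow, Int.cast_neg, Int.cast_one, hl2v, finCongr_apply,
      Fin.coe_cast]
    ring

lemma fwick_cons_cons (A : ℕ → ℕ → ℂ) (i r0 : ℕ) (rest' : List ℕ) :
    fwick A (i :: r0 :: rest') =
      ∑ l : Fin ((r0 :: rest').length),
        (-1 : ℂ) ^ (l : ℕ) * A i ((r0 :: rest').get l) *
          fwick A ((r0 :: rest').eraseIdx (l : ℕ)) := by
  rw [fwick.eq_def]

lemma fwick_odd (A : ℕ → ℕ → ℂ) :
    ∀ (n : ℕ) (v : List ℕ), v.length ≤ n → Odd v.length → fwick A v = 0 := by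
  intro n
  induction n with
  | zero =>
    intro v hv hodd
    obtain ⟨t, ht⟩ := hodd
    omega
  | succ n ih =>
    intro v hv hodd
    cases v with
    | nil =>
      obtain ⟨t, ht⟩ := hodd
      simp at ht
    | cons i rest =>
      cases rest with
      | nil => simp [fwick]
      | cons r0 rest' =>
        rw [fwick_cons_cons]
        apply Finset.sum_eq_zero
        intro l _
        have hl := l.isLt
        simp only [List.length_cons] at hl hv
        obtain ⟨t, ht⟩ := hodd
        simp only [List.length_cons] at ht
        have h0 : fwick A ((r0 :: rest').eraseIdx (l : ℕ)) = 0 := by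
          apply ih
          · rw [List.length_eraseIdx]
            simp only [List.length_cons]
            split <;> omega
          · rw [List.length_eraseIdx]
            simp only [List.length_cons, show (l : ℕ) < rest'.length + 1 from hl, if_true]
            exact ⟨t - 1, by omega⟩
        rw [h0, mul_zero]

lemma fwick_even (A : ℕ → ℕ → ℂ) :
    ∀ (m : ℕ) (v : List ℕ) (h : v.length = 2 * m), fwick A v = pfSum A m v h := by
  intro m
  induction m with
  | zero =>
    intro v h
    have hv : v = [] := List.length_eq_zero_iff.mp (by simpa using h)
    subst hv
    rw [fwick.eq_1, pfSum_zero]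
  | succ m ih =>
    intro v h
    cases v with
    | nil => simp at h
    | cons i rest =>
      cases rest with
      | nil =>
        simp only [List.length_cons, List.length_nil] at h
        omega
      | cons r0 rest' =>
        have hr : (r0 :: rest').length = 2 * m + 1 := by
          simp only [List.length_cons] at h ⊢
          omega
        rw [fwick_cons_cons, pfSum_cons A m i (r0 :: rest') hr h]
        apply Finset.sum_congr rfl
        intro l _
        rw [ih ((r0 :: rest').eraseIdx (l : ℕ))
          (by rw [List.length_eraseIdx]; simp only [l.isLt, if_true]; omega)]

end WickAux

/-- Fermionic Wick theorem: for an antisymmetric kernel A, the recursion gives 0 in odd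
length, and for length `n = 2m` the Pfaffian-type sum
`Σ_ρ sgn(ρ)·Π_{j=1}^m A(i_{ρ(2j−1)}, i_{ρ(2j)})` over permutations ρ of {1,…,n} with
`ρ(2j−1) < ρ(2j)` and `ρ(1) < ρ(3) < ⋯ < ρ(2m−1)` (0-indexed below). -/


theorem fermionic_wick_theorem (A : ℕ → ℕ → ℂ) (hA : ∀ a b, A a b = -A b a) :
    (∀ v : List ℕ, Odd v.length → fwick A v = 0) ∧
    (∀ (m : ℕ) (v : List ℕ) (h : v.length = 2 * m),
      fwick A v =
        ∑ ρ ∈ Finset.univ.filter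
            (fun ρ : Equiv.Perm (Fin (2 * m)) =>
              (∀ j : Fin m,
                  ρ ⟨2 * (j : ℕ), by have := j.isLt; omega⟩ <
                    ρ ⟨2 * (j : ℕ) + 1, by have := j.isLt; omega⟩) ∧
              (∀ j k : Fin m, j < k →
                  ρ ⟨2 * (j : ℕ), by have := j.isLt; omega⟩ <
                    ρ ⟨2 * (k : ℕ), by have := k.isLt; omega⟩)),
          ((Equiv.Perm.sign ρ : ℤ) : ℂ) *
            ∏ j : Fin m,
              A (v.get (Fin.cast h.symm (ρ ⟨2 * (j : ℕ), by have := j.isLt; omega⟩)))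
                (v.get (Fin.cast h.symm (ρ ⟨2 * (j : ℕ) + 1, by have := j.isLt; omega⟩)))) := by
  constructor
  · intro v hodd
    exact fwick_odd A v.length v le_rfl hodd
  · intro m v h
    exact fwick_even A m v h
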